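/- arXiv:1506.06322 — 2 statements merged into one kernel-verified Lean document; each statement's English description precedes it below -/
import Mathlib

section
/- Let F be a CDF on ℝ, and let q_1,...,q_k ≥ 0 with Σ q_r = 1. Define F_q(t) = Σ_{r=1}^k q_r F_(r)(t) where F_(r) is the CDF of the r-th order statistic of a sample of size k from F. If q_r = 1/k for all r then F_q = F; conversely, if F is continuous and strictly increasing on an interval where it takes all values in (0,1) and F_q = F, then q_r = 1/k for all r. -/
/-!
With the partial sums `c j = q 1 + ⋯ + q j` and the Bernstein basis
`b j p = (k choose j) p^j (1 - p)^(k - j)`, one has `F_q t = ∑ j, c j * b j (F t)`, while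
`∑ j, (j / k) * b j p = p`. Hence `F_q = F` says `∑ j, (c j - j / k) * b j p = 0` for every `p`
in the range of `F`. On `(0, 1)` the substitution `p = u / (1 + u)` turns this sum into
`(1 + u)^(-k)` times a polynomial in `u` vanishing on `(0, ∞)`, so `c j = j / k` for all `j`,
that is, `q r = 1 / k`.
-/

open Finset Polynomial

theorem sum_Icc_mul_sum_Icc_eq_sum_range_partialSum_mul (k : ℕ) (q B : ℕ → ℝ) :
    ∑ r ∈ Icc 1 k, q r * ∑ j ∈ Icc r k, B j
      = ∑ j ∈ range (k + 1), (∑ r ∈ Icc 1 j, q r) * B j := by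
  simp only [mul_sum, sum_mul]
  exact sum_comm' fun r j => by simp only [mem_Icc, mem_range]; omega

theorem sum_natCast_mul_bernstein_eq (k : ℕ) (p : ℝ) :
    ∑ j ∈ range (k + 1), (j : ℝ) * ((k.choose j : ℝ) * p ^ j * (1 - p) ^ (k - j)) = k * p := by
  simpa [bernsteinPolynomial, eval_finsetSum] using
    congrArg (eval p) (bernsteinPolynomial.sum_smul ℝ k)

theorem sum_mul_one_div_mul_bernstein_eq {k : ℕ} (hk : k ≠ 0) (p : ℝ) :
    ∑ j ∈ range (k + 1), (j : ℝ) * (1 / k) * ((k.choose j : ℝ) * p ^ j * (1 - p) ^ (k - j))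
      = p := by
  calc _ = 1 / k * ∑ j ∈ range (k + 1),
          (j : ℝ) * ((k.choose j : ℝ) * p ^ j * (1 - p) ^ (k - j)) := by
        rw [mul_sum]; exact sum_congr rfl fun j _ => by ring
    _ = p := by rw [sum_natCast_mul_bernstein_eq]; field_simp

theorem coeff_eq_zero_of_sum_mul_pow_eq_zero {n : ℕ} {b : ℕ → ℝ}
    (h : ∀ u > 0, ∑ j ∈ range (n + 1), b j * u ^ j = 0) {j : ℕ} (hj : j ≤ n) : b j = 0 := by
  set Q : ℝ[X] := ∑ i ∈ range (n + 1), C (b i) * X ^ i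
  have hQ : Q = 0 := by
    refine eq_zero_of_infinite_isRoot Q ((Set.Ioi_infinite 0).mono fun u hu => ?_)
    simpa [Q, eval_finsetSum] using h u hu
  simpa [Q, coeff_C_mul, coeff_X_pow, Nat.lt_succ_of_le hj] using congrArg (coeff · j) hQ

theorem div_one_add_pow_mul_one_sub_div_one_add_pow {u : ℝ} (hu : 1 + u ≠ 0) {j k : ℕ}
    (hj : j ≤ k) : (u / (1 + u)) ^ j * (1 - u / (1 + u)) ^ (k - j) = u ^ j / (1 + u) ^ k := by
  have hsub : 1 - u / (1 + u) = 1 / (1 + u) := by field_simp; ring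
  rw [hsub, div_pow, one_div_pow, div_mul_div_comm, mul_one, ← pow_add, Nat.add_sub_cancel' hj]

theorem eq_zero_of_sum_mul_bernstein_eq_zero {k : ℕ} {a : ℕ → ℝ}
    (h : ∀ p ∈ Set.Ioo (0 : ℝ) 1,
      ∑ j ∈ range (k + 1), a j * ((k.choose j : ℝ) * p ^ j * (1 - p) ^ (k - j)) = 0)
    {j : ℕ} (hj : j ≤ k) : a j = 0 := by
  suffices a j * k.choose j = 0 by
    exact (mul_eq_zero.1 this).resolve_right (by exact_mod_cast (Nat.choose_pos hj).ne')
  refine coeff_eq_zero_of_sum_mul_pow_eq_zero (b := fun i => a i * k.choose i) (fun u hu => ?_) hj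
  have hu1 : (0 : ℝ) < 1 + u := by linarith
  have hp : u / (1 + u) ∈ Set.Ioo (0 : ℝ) 1 :=
    ⟨by positivity, (div_lt_one hu1).2 (by linarith)⟩
  have hterm : ∀ i ∈ range (k + 1), a i * ((k.choose i : ℝ) * (u / (1 + u)) ^ i *
      (1 - u / (1 + u)) ^ (k - i)) = a i * k.choose i * u ^ i / (1 + u) ^ k := fun i hi => by
    rw [mul_assoc (k.choose i : ℝ), div_one_add_pow_mul_one_sub_div_one_add_pow hu1.ne'
      (Nat.lt_succ_iff.1 (mem_range.1 hi))]
    ring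
  have hsum := h _ hp
  rw [sum_congr rfl hterm, ← sum_div, div_eq_zero_iff] at hsum
  exact hsum.resolve_right (pow_ne_zero _ hu1.ne')

theorem eq_of_partialSum_eq_mul {k : ℕ} {q : ℕ → ℝ} {a : ℝ}
    (h : ∀ j ≤ k, ∑ r ∈ Icc 1 j, q r = j * a) : ∀ r ∈ Icc 1 k, q r = a := by
  intro r hr
  obtain ⟨hr1, hrk⟩ := mem_Icc.1 hr
  obtain ⟨s, rfl⟩ := Nat.exists_eq_add_of_le' hr1
  have := h (s + 1) hrk
  rw [sum_Icc_succ_top (by omega), h s (by omega)] at this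
  push_cast at this
  linarith

theorem urss_limit_df_eq_iff_balanced_general (k : ℕ) (hk : 0 < k) (F : ℝ → ℝ)
    (q : ℕ → ℝ)
    (Fq : ℝ → ℝ)
    (hFq : ∀ t, Fq t = ∑ r ∈ Finset.Icc 1 k, q r * ∑ j ∈ Finset.Icc r k,
        (k.choose j : ℝ) * F t ^ j * (1 - F t) ^ (k - j)) :
    ((∀ r ∈ Finset.Icc 1 k, q r = 1 / (k:ℝ)) → ∀ t, Fq t = F t) ∧
    ((Set.Ioo (0:ℝ) 1 ⊆ Set.range F) → (∀ t, Fq t = F t) →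
      ∀ r ∈ Finset.Icc 1 k, q r = 1 / (k:ℝ)) := by
  have hdiff : ∀ t, Fq t - F t = ∑ j ∈ range (k + 1), (∑ r ∈ Icc 1 j, q r - j * (1 / k)) *
      ((k.choose j : ℝ) * F t ^ j * (1 - F t) ^ (k - j)) := fun t => by
    simp only [sub_mul, sum_sub_distrib, sum_mul_one_div_mul_bernstein_eq hk.ne', hFq t,
      sum_Icc_mul_sum_Icc_eq_sum_range_partialSum_mul]
  refine ⟨fun hbal t => ?_, fun hsurj heq => ?_⟩
  · refine sub_eq_zero.1 ((hdiff t).trans (sum_eq_zero fun j hj => ?_))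
    have hjk : j ≤ k := Nat.lt_succ_iff.1 (mem_range.1 hj)
    rw [sum_congr rfl fun r hr => hbal r (Icc_subset_Icc_right hjk hr)]
    simp
  · refine eq_of_partialSum_eq_mul fun j hj => sub_eq_zero.1 ?_
    refine eq_zero_of_sum_mul_bernstein_eq_zero
      (a := fun j => ∑ r ∈ Icc 1 j, q r - j * (1 / k)) (fun p hp => ?_) hj
    obtain ⟨t, rfl⟩ := hsurj hp
    rw [← hdiff, heq, sub_self]

/-- The URSS limiting distribution F_q = ∑ q_r F_(r) equals F iff the design is
balanced: if q_r = 1/k for all r then F_q = F; conversely, if F is continuous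
and attains all values in (0,1), then F_q = F forces q_r = 1/k for all r. -/
theorem urss_limit_df_eq_iff_balanced (k : ℕ) (hk : 0 < k) (F : ℝ → ℝ)
    (hFcont : Continuous F) (hFrange : ∀ t, F t ∈ Set.Icc (0:ℝ) 1)
    (q : ℕ → ℝ) (hq0 : ∀ r, 0 ≤ q r) (hq1 : ∑ r ∈ Finset.Icc 1 k, q r = 1)
    (Fq : ℝ → ℝ)
    (hFq : ∀ t, Fq t = ∑ r ∈ Finset.Icc 1 k, q r * ∑ j ∈ Finset.Icc r k,
        (k.choose j : ℝ) * F t ^ j * (1 - F t) ^ (k - j)) :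
    ((∀ r ∈ Finset.Icc 1 k, q r = 1 / (k:ℝ)) → ∀ t, Fq t = F t) ∧
    ((Set.Ioo (0:ℝ) 1 ⊆ Set.range F) → (∀ t, Fq t = F t) →
      ∀ r ∈ Finset.Icc 1 k, q r = 1 / (k:ℝ)) :=
  urss_limit_df_eq_iff_balanced_general k hk F q Fq hFq
end

section
/- Let F be a continuous CDF and for r = 1,...,k let F_(r)(t) = Σ_{j=r}^k C(k,j) F(t)^j (1−F(t))^{k−j}. Let q_1,...,q_k ≥ 0 sum to 1 and set F_q = Σ_r q_r F_(r). If Σ_{r=1}^j q_r ≥ j/k for all j = 1,...,k, then for each t, F_q(t) − F(t) = Σ_{j=1}^{k−1} (Σ_{r=1}^j q_r − j/k)(F_(j)(t) − F_(j+1)(t)) ≥ 0, so in particular F_q(t) ≥ F(t). -/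
private lemma abel_aux (a b : ℕ → ℝ) : ∀ m : ℕ,
    ∑ j ∈ Finset.Icc 1 m, (∑ r ∈ Finset.Icc 1 j, a r) * (b j - b (j + 1)) =
      (∑ j ∈ Finset.Icc 1 m, a j * b j) - (∑ r ∈ Finset.Icc 1 m, a r) * b (m + 1) := by
  intro m
  induction m with
  | zero => simp
  | succ n ih =>
      rw [Finset.sum_Icc_succ_top (by omega : 1 ≤ n + 1),
        Finset.sum_Icc_succ_top (by omega : 1 ≤ n + 1),
        Finset.sum_Icc_succ_top (by omega : 1 ≤ n + 1), ih]
      ring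

private lemma sum_ord_stat (k : ℕ) (hk : 0 < k) (p : ℝ) :
    ∑ r ∈ Finset.Icc 1 k, ∑ j ∈ Finset.Icc r k,
        (k.choose j : ℝ) * p ^ j * (1 - p) ^ (k - j) = k * p := by
  rw [Finset.sum_comm' (t' := Finset.Icc 1 k) (s' := fun j => Finset.Icc 1 j)
    (by intro r j; simp only [Finset.mem_Icc]; omega)]
  have h1 : ∀ j ∈ Finset.Icc 1 k,
      ∑ _r ∈ Finset.Icc 1 j, (k.choose j : ℝ) * p ^ j * (1 - p) ^ (k - j)
        = (j : ℝ) * ((k.choose j : ℝ) * p ^ j * (1 - p) ^ (k - j)) := by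
    intro j hj
    rw [Finset.sum_const, Nat.card_Icc]
    simp only [Nat.add_sub_cancel, nsmul_eq_mul]
  rw [Finset.sum_congr rfl h1]
  obtain ⟨n, rfl⟩ : ∃ n, k = n + 1 := ⟨k - 1, by omega⟩
  have h2 : Finset.Icc 1 (n + 1)
      = Finset.map ⟨Nat.succ, Nat.succ_injective⟩ (Finset.range (n + 1)) := by
    ext x
    simp only [Finset.mem_Icc, Finset.mem_map, Finset.mem_range,
      Function.Embedding.coeFn_mk, Nat.succ_eq_add_one]
    constructor
    · rintro ⟨h1, h2⟩; exact ⟨x - 1, by omega, by omega⟩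
    · rintro ⟨a, ha, rfl⟩; omega
  rw [h2, Finset.sum_map]
  simp only [Function.Embedding.coeFn_mk]
  have h3 : ∀ i ∈ Finset.range (n + 1),
      ((Nat.succ i : ℕ) : ℝ) * (((n + 1).choose (Nat.succ i) : ℝ)
          * p ^ (Nat.succ i) * (1 - p) ^ (n + 1 - Nat.succ i))
        = ((n : ℝ) + 1) * p * ((n.choose i : ℝ) * (p ^ i * (1 - p) ^ (n - i))) := by
    intro i hi
    have hc : (i + 1) * (n + 1).choose (i + 1) = (n + 1) * n.choose i := by
      rw [mul_comm, Nat.add_one_mul_choose_eq n i]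
    have hc' : ((i : ℝ) + 1) * ((n + 1).choose (i + 1) : ℝ)
        = ((n : ℝ) + 1) * (n.choose i : ℝ) := by exact_mod_cast hc
    have he : n + 1 - Nat.succ i = n - i := by omega
    rw [he]
    push_cast [Nat.succ_eq_add_one]
    linear_combination (p ^ (i + 1) * (1 - p) ^ (n - i)) * hc'
  rw [Finset.sum_congr rfl h3, ← Finset.mul_sum]
  have h4 : ∑ i ∈ Finset.range (n + 1), (n.choose i : ℝ) * (p ^ i * (1 - p) ^ (n - i)) = 1 := by
    have hbin := add_pow p (1 - p) n
    simp only [add_sub_cancel, one_pow] at hbin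
    calc ∑ i ∈ Finset.range (n + 1), (n.choose i : ℝ) * (p ^ i * (1 - p) ^ (n - i))
        = ∑ i ∈ Finset.range (n + 1), p ^ i * (1 - p) ^ (n - i) * (n.choose i : ℝ) :=
          Finset.sum_congr rfl (fun i _ => by ring)
      _ = 1 := hbin.symm
  rw [h4]
  push_cast
  ring

/-- Abel summation for the URSS limit distribution: if the partial sums of the
rank proportions dominate those of the uniform design, then
F_q(t) − F(t) = ∑_{j=1}^{k−1} (∑_{r≤j} q_r − j/k)(F_(j)(t) − F_(j+1)(t)) ≥ 0. -/
theorem urss_df_abel_decomposition (k : ℕ) (hk : 0 < k) (F : ℝ → ℝ)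
    (hFcont : Continuous F) (hFrange : ∀ t, F t ∈ Set.Icc (0:ℝ) 1)
    (q : ℕ → ℝ) (hq0 : ∀ r, 0 ≤ q r) (hq1 : ∑ r ∈ Finset.Icc 1 k, q r = 1)
    (hmaj : ∀ j ∈ Finset.Icc 1 k, (j:ℝ) / k ≤ ∑ r ∈ Finset.Icc 1 j, q r)
    (B : ℕ → ℝ → ℝ)
    (hB : ∀ r t, B r t = ∑ j ∈ Finset.Icc r k,
        (k.choose j : ℝ) * F t ^ j * (1 - F t) ^ (k - j))
    (Fq : ℝ → ℝ) (hFq : ∀ t, Fq t = ∑ r ∈ Finset.Icc 1 k, q r * B r t)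
    (t : ℝ) :
    Fq t - F t = ∑ j ∈ Finset.Icc 1 (k - 1),
      ((∑ r ∈ Finset.Icc 1 j, q r) - (j:ℝ) / k) * (B j t - B (j + 1) t) ∧
    F t ≤ Fq t := by
  have hkR : (k : ℝ) ≠ 0 := Nat.cast_ne_zero.mpr hk.ne'
  obtain ⟨hp0, hp1⟩ := hFrange t
  have hsumB : ∑ r ∈ Finset.Icc 1 k, B r t = (k : ℝ) * F t := by
    calc ∑ r ∈ Finset.Icc 1 k, B r t
        = ∑ r ∈ Finset.Icc 1 k, ∑ j ∈ Finset.Icc r k,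
            (k.choose j : ℝ) * F t ^ j * (1 - F t) ^ (k - j) :=
          Finset.sum_congr rfl (fun r _ => hB r t)
      _ = (k : ℝ) * F t := sum_ord_stat k hk (F t)
  have hpart : ∀ j : ℕ, ∑ r ∈ Finset.Icc 1 j, (q r - 1 / (k : ℝ)) =
      (∑ r ∈ Finset.Icc 1 j, q r) - (j : ℝ) / k := by
    intro j
    rw [Finset.sum_sub_distrib, Finset.sum_const, Nat.card_Icc]
    simp only [Nat.add_sub_cancel, nsmul_eq_mul]
    ring
  have hmain : Fq t - F t = ∑ j ∈ Finset.Icc 1 (k - 1),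
      ((∑ r ∈ Finset.Icc 1 j, q r) - (j:ℝ) / k) * (B j t - B (j + 1) t) := by
    have habel := abel_aux (fun r => q r - 1 / (k : ℝ)) (fun j => B j t) (k - 1)
    have hA : (∑ j ∈ Finset.Icc 1 (k-1),
          (∑ r ∈ Finset.Icc 1 j, (q r - 1/(k:ℝ))) * (B j t - B (j+1) t))
        = ∑ j ∈ Finset.Icc 1 (k-1),
          ((∑ r ∈ Finset.Icc 1 j, q r) - (j:ℝ)/k) * (B j t - B (j+1) t) :=
      Finset.sum_congr rfl (fun j _ => by rw [hpart j])
    rw [← hA, habel]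
    obtain ⟨n, rfl⟩ : ∃ n, k = n + 1 := ⟨k - 1, by omega⟩
    simp only [Nat.add_sub_cancel] at *
    have hne : ((n + 1 : ℕ) : ℝ) ≠ 0 := hkR
    have hAk : ∑ r ∈ Finset.Icc 1 (n + 1), (q r - 1/((n + 1 : ℕ) : ℝ)) = 0 := by
      rw [hpart, hq1]
      field_simp
      ring
    have hsplit := Finset.sum_Icc_succ_top (by omega : 1 ≤ n + 1)
      (fun j => (q j - 1/((n + 1 : ℕ) : ℝ)) * B j t)
    have hAn := Finset.sum_Icc_succ_top (by omega : 1 ≤ n + 1)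
      (fun r => q r - 1/((n + 1 : ℕ) : ℝ))
    rw [hAk] at hAn
    have hexp : ∑ j ∈ Finset.Icc 1 (n+1), (q j - 1/((n + 1 : ℕ) : ℝ)) * B j t
        = (∑ r ∈ Finset.Icc 1 (n+1), q r * B r t)
          - (1/((n + 1 : ℕ) : ℝ)) * ∑ r ∈ Finset.Icc 1 (n+1), B r t := by
      rw [Finset.mul_sum, ← Finset.sum_sub_distrib]
      exact Finset.sum_congr rfl (fun j _ => by ring)
    have key : Fq t - F t = ∑ j ∈ Finset.Icc 1 (n+1), (q j - 1/((n + 1 : ℕ) : ℝ)) * B j t := by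
      rw [hexp, hsumB, hFq t]
      field_simp
    rw [hsplit] at key
    have hAn' : ∑ r ∈ Finset.Icc 1 n, (q r - 1/((n + 1 : ℕ) : ℝ))
        = -(q (n+1) - 1/((n + 1 : ℕ) : ℝ)) := by linarith
    rw [hAn']
    linarith
  refine ⟨hmain, ?_⟩
  have hnn : ∀ j ∈ Finset.Icc 1 (k - 1),
      0 ≤ ((∑ r ∈ Finset.Icc 1 j, q r) - (j:ℝ)/k) * (B j t - B (j + 1) t) := by
    intro j hj
    simp only [Finset.mem_Icc] at hj
    apply mul_nonneg
    · have := hmaj j (Finset.mem_Icc.mpr ⟨hj.1, by omega⟩)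
      linarith
    · have hjk : j ≤ k := by omega
      have hB1 : B j t - B (j+1) t = (k.choose j : ℝ) * F t ^ j * (1 - F t) ^ (k - j) := by
        rw [hB, hB, Finset.Icc_add_one_left_eq_Ioc, Finset.Icc_eq_cons_Ioc hjk, Finset.sum_cons]
        ring
      rw [hB1]
      have h1p : (0:ℝ) ≤ 1 - F t := by linarith
      exact mul_nonneg (mul_nonneg (Nat.cast_nonneg _) (pow_nonneg hp0 _)) (pow_nonneg h1p _)
  have hsum := Finset.sum_nonneg hnn
  rw [← hmain] at hsum
  linarith
end
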